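/- arXiv:2601.09506 — 2 statements merged into one kernel-verified Lean document; each statement's English description precedes it below -/
import Mathlib

section
/- Let F be a finite simple graph with a caterpillar decomposition D = ((β_i, L_i))_{i∈[t]} of width at most k with spine S, and assume additionally that V(L_i) ∩ V(L_j) ⊆ V(S) for all i ≠ j, that V(L_i) ∩ V(S) = β_i for all i, that every vertex of F lies in V(S) or in some V(L_i), and that every edge of F lies in S or in some L_i. Then for every finite simple graph G: hom(F, G) = Σ_{ψ} Π_{i=1}^{t} hom(L_i^{tup(β,i)}, G^{ψ(tup(β,i))}), where the sum ranges over all graph homomorphisms ψ : S → G and ψ(tup(β,i)) denotes entrywise application of ψ. -/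
open Matrix

/-- Atomic type of a `k`-tuple: for each pair of indices, whether the entries are
equal and whether they are adjacent. -/
def AtpType (k : ℕ) : Type := Fin k → Fin k → Prop × Prop

/-- The atomic type of a `k`-tuple of vertices of a graph. -/
def atp {V : Type} (G : SimpleGraph V) (k : ℕ) (u : Fin k → V) : AtpType k :=
  fun i j => (u i = u j, G.Adj (u i) (u j))

/-- The value type of the `k`-dimensional Weisfeiler–Leman coloring after `h` rounds. -/
def WLColor (k : ℕ) : ℕ → Type
  | 0 => AtpType k
  | h + 1 => WLColor k h × Multiset (AtpType (k + 1) × (Fin k → WLColor k h))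

/-- The `k`-dimensional Weisfeiler–Leman coloring of `k`-tuples, after `h` rounds. -/
def wl {V : Type} [Fintype V] (G : SimpleGraph V) (k : ℕ) :
    (h : ℕ) → (Fin k → V) → WLColor k h
  | 0, u => atp G k u
  | h + 1, u =>
      (wl G k h u,
        (Finset.univ : Finset V).val.map fun v =>
          (atp G (k + 1) (Fin.snoc u v), fun p => wl G k h (Function.update u p v)))

/-- Common value type for the colors `χ_{k,h}` of nonempty tuples of length `≤ k+1`. -/
def ColorType (k : ℕ) : Type := (Σ d : ℕ, WLColor k d) ⊕ AtpType (k + 1)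

/-- The coloring `χ_{k,h}` of nonempty tuples (given as lists) of vertices:
an `ℓ`-tuple with `ℓ ≤ k` is padded with its last entry to a `k`-tuple and colored by
`χ_k^(k+h-ℓ)`; a `(k+1)`-tuple is colored by its atomic type. Empty lists get `none`. -/
def chiKH {V : Type} [Fintype V] (G : SimpleGraph V) (k h : ℕ) :
    List V → Option (ColorType k)
  | [] => none
  | v :: vs =>
      let u := v :: vs
      let last := u.getLastD v
      if u.length ≤ k then
        some (Sum.inl ⟨k + h - u.length, wl G k (k + h - u.length) fun i => u.getD i last⟩)
      else
        some (Sum.inr (atp G (k + 1) fun i => u.getD i last))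

/-- One step of a `k`-simplicial walk, on states given as duplicate-free tuples
(ordered by the time their entries became incoming): either a new vertex becomes
incoming (appended at the end, sets of size at most `k+1`), or a vertex at some
position is outgoing (sets stay nonempty). -/
inductive SWStep (V : Type) (k : ℕ) : List V → List V → Prop
  | add (l : List V) (x : V) (hx : x ∉ l) (hl : l.length ≤ k) : SWStep V k l (l ++ [x])
  | remove (l : List V) (p : ℕ) (hp : p < l.length) (hl : 2 ≤ l.length) :
      SWStep V k l (l.eraseIdx p)

/-- A `k`-simplicial walk: a nonempty sequence of states starting from a single vertex,
consecutive states related by `SWStep`. -/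
structure SWalk (V : Type) (k : ℕ) where
  states : List (List V)
  first_single : ∃ v : V, states.head? = some [v]
  steps : states.Chain' (SWStep V k)

/-- Number of occurrences of the `h`-color word `c` among `k`-simplicial walks in `G`. -/
noncomputable def swCount {V : Type} [Fintype V] (G : SimpleGraph V) (k h : ℕ)
    (c : List (Option (ColorType k))) : ℕ :=
  Set.ncard {w : SWalk V k | w.states.map (chiKH G k h) = c}

/-- The number of times a vertex `v` is incoming in a sequence of states. -/
noncomputable def incomingCount {W : Type} (s : List (List W)) (v : W) : ℕ :=
  Set.ncard {i : ℕ | i < s.length ∧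
    ((i = 0 ∧ s.getD 0 [] = [v]) ∨ (1 ≤ i ∧ s.getD i [] = s.getD (i - 1) [] ++ [v]))}
/-- A pebble forest cover witnessing membership in the class `LT_k^d`:
`le` is a partial order (forest cover) and `pf` a `k`-pebbling function. -/
structure IsPFC {W : Type} (F : SimpleGraph W) (k d : ℕ) (labels : List W)
    (le : W → W → Prop) (pf : W → Fin k) : Prop where
  porder : IsPartialOrder W le
  downChain : ∀ x : W, IsChain le {y | le y x}
  edgeComp : ∀ ⦃a b : W⦄, F.Adj a b → le a b ∨ le b a
  pebble : ∀ ⦃a b : W⦄, F.Adj a b → le a b →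
      ∀ w : W, le a w → a ≠ w → le w b → pf a ≠ pf w
  labelsChain : IsChain le {x | x ∈ labels}
  belowLabels : ∀ v : W, v ∉ labels → ∀ s ∈ labels, le v s
  unlabeledDepth : ∀ s : Finset W, (∀ x ∈ s, x ∉ labels) → IsChain le ↑s → s.card ≤ d
  labelsInj : ∀ x ∈ labels, ∀ y ∈ labels, pf x = pf y → x = y

/-- The labeled graph `F` with labels `labels` belongs to the class `LT_k^d`. -/
def InLT {W : Type} (k d : ℕ) (F : SimpleGraph W) (labels : List W) : Prop :=
  labels.length ≤ k ∧ ∃ (le : W → W → Prop) (pf : W → Fin k), IsPFC F k d labels le pf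

/-- The vertex set of the spine of a caterpillar decomposition. -/
def spineSet {W : Type} (D : List (List W × Set W)) : Set W :=
  {v | ∃ p ∈ D, v ∈ p.1}

/-- Condition (C3) for one leg `p = (β_i, L_i)` of a caterpillar decomposition, with
depth parameter `d`: the labeled leg belongs to `LT_k^d`, or to `LT_{k+1}^0` with `d = 0`. -/
def LegOK {W : Type} (k d : ℕ) (F : SimpleGraph W) (p : List W × Set W) : Prop :=
  (∃ labels : List ↥p.2, labels.map Subtype.val = p.1 ∧ InLT k d (F.induce p.2) labels) ∨
    (d = 0 ∧ ∃ labels : List ↥p.2, labels.map Subtype.val = p.1 ∧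
      InLT (k + 1) 0 (F.induce p.2) labels)

/-- `D` is a caterpillar decomposition of `F` of width at most `k`: a sequence of pairs
`(β_i, L_i)` (tuples of the simplicial walk and vertex sets of the induced legs). -/
structure IsCD {W : Type} (F : SimpleGraph W) (k : ℕ) (D : List (List W × Set W)) : Prop where
  first : ∃ v : W, (D.map Prod.fst).head? = some [v]
  walk : (D.map Prod.fst).Chain' (SWStep W k)
  mem_leg : ∀ p ∈ D, ∀ v ∈ p.1, v ∈ p.2
  c1 : ∀ p ∈ D, ∀ v ∈ p.2, v ∉ p.1 → ∀ w, F.Adj v w → w ∈ p.2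
  d1 : ∀ v ∈ spineSet D, incomingCount (D.map Prod.fst) v = 1
  d2 : ∀ ⦃a b : W⦄, F.Adj a b → a ∈ spineSet D → b ∈ spineSet D →
      ∃ p ∈ D, a ∈ p.1 ∧ b ∈ p.1
  c3 : ∀ p ∈ D, ∃ d : ℕ, LegOK k d F p

/-- Membership in the class `P_{k,h}`: existence of a caterpillar decomposition of
width at most `k` and height at most `h`. -/
def InP {W : Type} (k h : ℕ) (F : SimpleGraph W) : Prop :=
  ∃ D : List (List W × Set W), IsCD F k D ∧
    ∀ p ∈ D, ∃ d : ℕ, LegOK k d F p ∧ p.1.length + d - k ≤ h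

section GlueAux

instance relHomFinite {α β : Type} {r : α → α → Prop} {s : β → β → Prop} [Finite α] [Finite β] :
    Finite (r →r s) :=
  Finite.of_injective (fun f => (f : α → β)) (DFunLike.coe_injective)

lemma natCard_sigma {ι : Type} [Finite ι] (f : ι → Type) [∀ i, Finite (f i)] :
    Nat.card ((i : ι) × f i) = ∑ᶠ i, Nat.card (f i) := by
  cases nonempty_fintype ι
  letI := fun i => Fintype.ofFinite (f i)
  rw [finsum_eq_sum_of_fintype, Nat.card_eq_fintype_card]
  simp [Nat.card_eq_fintype_card]

variable {VF W : Type} (F : SimpleGraph VF) (G : SimpleGraph W)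

/-- The type of spine homomorphisms. -/
abbrev SpineHom (D : List (List VF × Set VF)) : Type :=
  {f : ↥(spineSet D) → W //
    ∀ a b : ↥(spineSet D), (F.induce (spineSet D)).Adj a b → G.Adj (f a) (f b)}

/-- The type of leg homomorphisms compatible with a spine homomorphism. -/
abbrev LegHom (D : List (List VF × Set VF)) (hsub : ∀ p ∈ D, ∀ v ∈ p.1, v ∈ p.2)
    (ψ : SpineHom F G D) (p : {x // x ∈ D}) : Type :=
  {φ : F.induce p.1.2 →g G //
    ∀ v (hv : v ∈ p.1.1), φ ⟨v, hsub p.1 p.2 v hv⟩ = ψ.1 ⟨v, ⟨p.1, p.2, hv⟩⟩}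

variable (D : List (List VF × Set VF)) (hsub : ∀ p ∈ D, ∀ v ∈ p.1, v ∈ p.2)

/-- The index of a leg as a member of `D`. -/
def legIdx (i : Fin D.length) : {x // x ∈ D} := ⟨D.get i, D.get_mem i⟩

/-- Restriction of a homomorphism `F →g G` to the spine and all the legs. -/
def restrictAll (f : F →g G) :
    Σ ψ : SpineHom F G D, ∀ i : Fin D.length, LegHom F G D hsub ψ (legIdx D i) :=
  ⟨⟨fun v => f v.1, fun _ _ h => f.map_rel h⟩,
   fun _ => ⟨⟨fun v => f v.1, fun h => f.map_rel h⟩, fun _ _ => rfl⟩⟩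

variable (ψ : SpineHom F G D)
  (φ : ∀ i : Fin D.length, LegHom F G D hsub ψ (legIdx D i))
  (hvert : ∀ v : VF, v ∉ spineSet D → ∃ i : Fin D.length, v ∈ (D.get i).2)

open Classical in
/-- The glued function. -/
noncomputable def glueFun : VF → W := fun v =>
  if h : v ∈ spineSet D then ψ.1 ⟨v, h⟩
  else (φ (Classical.choose (hvert v h))).1 ⟨v, Classical.choose_spec (hvert v h)⟩

lemma glueFun_spine (v : VF) (hv : v ∈ spineSet D) :
    glueFun F G D hsub ψ φ hvert v = ψ.1 ⟨v, hv⟩ := dif_pos hv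

lemma glueFun_leg
    (hlegs' : ∀ i j : Fin D.length, i ≠ j → ∀ v : VF,
      v ∈ (D.get i).2 → v ∈ (D.get j).2 → v ∈ spineSet D)
    (hlegspine : ∀ p ∈ D, ∀ v : VF, v ∈ p.2 → v ∈ spineSet D → v ∈ p.1)
    (i : Fin D.length) (v : VF) (hv : v ∈ (D.get i).2) :
    glueFun F G D hsub ψ φ hvert v = (φ i).1 ⟨v, hv⟩ := by
  unfold glueFun
  by_cases h : v ∈ spineSet D
  · rw [dif_pos h]
    have hv1 : v ∈ (D.get i).1 := hlegspine _ (D.get_mem i) v hv h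
    exact ((φ i).2 v hv1).symm
  · rw [dif_neg h]
    have hvj : v ∈ (D.get (Classical.choose (hvert v h))).2 :=
      Classical.choose_spec (hvert v h)
    by_cases hij : Classical.choose (hvert v h) = i
    · subst hij; rfl
    · exact absurd (hlegs' _ i hij v hvj hv) h

/-- The glued homomorphism. -/
noncomputable def glueHom
    (hlegs' : ∀ i j : Fin D.length, i ≠ j → ∀ v : VF,
      v ∈ (D.get i).2 → v ∈ (D.get j).2 → v ∈ spineSet D)
    (hlegspine : ∀ p ∈ D, ∀ v : VF, v ∈ p.2 → v ∈ spineSet D → v ∈ p.1)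
    (hedge : ∀ u v : VF, F.Adj u v → (u ∈ spineSet D ∧ v ∈ spineSet D) ∨
      ∃ i : Fin D.length, u ∈ (D.get i).2 ∧ v ∈ (D.get i).2) : F →g G where
  toFun := glueFun F G D hsub ψ φ hvert
  map_rel' := by
    intro a b hab
    rcases hedge a b hab with ⟨ha, hb⟩ | ⟨i, hia, hib⟩
    · rw [glueFun_spine F G D hsub ψ φ hvert a ha,
        glueFun_spine F G D hsub ψ φ hvert b hb]
      exact ψ.2 ⟨a, ha⟩ ⟨b, hb⟩ hab
    · rw [glueFun_leg F G D hsub ψ φ hvert hlegs' hlegspine i a hia,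
        glueFun_leg F G D hsub ψ φ hvert hlegs' hlegspine i b hib]
      exact (φ i).1.map_rel hab

lemma restrictAll_bijective
    (hlegs' : ∀ i j : Fin D.length, i ≠ j → ∀ v : VF,
      v ∈ (D.get i).2 → v ∈ (D.get j).2 → v ∈ spineSet D)
    (hlegspine : ∀ p ∈ D, ∀ v : VF, v ∈ p.2 → v ∈ spineSet D → v ∈ p.1)
    (hvert : ∀ v : VF, v ∉ spineSet D → ∃ i : Fin D.length, v ∈ (D.get i).2)
    (hedge : ∀ u v : VF, F.Adj u v → (u ∈ spineSet D ∧ v ∈ spineSet D) ∨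
      ∃ i : Fin D.length, u ∈ (D.get i).2 ∧ v ∈ (D.get i).2) :
    Function.Bijective (restrictAll F G D hsub) := by
  constructor
  · intro f f' h
    ext v
    rcases Classical.em (v ∈ spineSet D) with hv | hv
    · exact congrArg (fun t => t.1.1 ⟨v, hv⟩) h
    · obtain ⟨i, hvi⟩ := hvert v hv
      exact congrArg
        (fun t : Σ ψ : SpineHom F G D, ∀ i : Fin D.length, LegHom F G D hsub ψ (legIdx D i) =>
          ((t.2 i).1 : F.induce ((legIdx D i).1.2) →g G) ⟨v, hvi⟩) h
  · rintro ⟨ψ, φ⟩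
    obtain ⟨f, hfspine, hfleg⟩ :
        ∃ f : F →g G, (∀ (v : VF) (hv : v ∈ spineSet D), f v = ψ.1 ⟨v, hv⟩) ∧
          (∀ (i : Fin D.length) (v : VF) (hv : v ∈ (D.get i).2), f v = (φ i).1 ⟨v, hv⟩) :=
      ⟨glueHom F G D hsub ψ φ hvert hlegs' hlegspine hedge,
        fun v hv => glueFun_spine F G D hsub ψ φ hvert v hv,
        fun i v hv => glueFun_leg F G D hsub ψ φ hvert hlegs' hlegspine i v hv⟩
    have hψ : (restrictAll F G D hsub f).1 = ψ := by
      apply Subtype.ext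
      funext v
      exact hfspine v.1 v.2
    subst hψ
    refine ⟨f, Sigma.ext rfl (heq_of_eq (funext fun i => ?_))⟩
    apply Subtype.ext
    apply RelHom.ext
    intro v
    show f v.1 = (φ i).1 v
    rw [hfleg i v.1 v.2]

end GlueAux

/-- For a caterpillar decomposition `D` of `F` of width at most `k`
whose legs intersect pairwise only in the spine, meet the spine exactly in their walk
sets, and cover all vertices and edges of `F`, the homomorphism count `hom(F,G)`
factorizes as a sum over homomorphisms `ψ` from the spine to `G` of the product over the
legs of the labeled homomorphism counts `hom(L_i^{tup(β,i)}, G^{ψ(tup(β,i))})`. -/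
theorem hom_count_eq_sum_over_spine {VF W : Type} [Fintype VF] [Fintype W]
    (k : ℕ) (hk : 1 ≤ k)
    (F : SimpleGraph VF) (G : SimpleGraph W)
    (D : List (List VF × Set VF)) (hD : IsCD F k D)
    (hlegs : ∀ i j : ℕ, (hi : i < D.length) → (hj : j < D.length) → i ≠ j →
      ∀ v : VF, v ∈ (D[i]'hi).2 → v ∈ (D[j]'hj).2 → v ∈ spineSet D)
    (hlegspine : ∀ p ∈ D, ∀ v : VF, (v ∈ p.2 ∧ v ∈ spineSet D) ↔ v ∈ p.1)
    (hvert : ∀ v : VF, v ∈ spineSet D ∨ ∃ p ∈ D, v ∈ p.2)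
    (hedge : ∀ ⦃u v : VF⦄, F.Adj u v →
      (u ∈ spineSet D ∧ v ∈ spineSet D) ∨ ∃ p ∈ D, u ∈ p.2 ∧ v ∈ p.2) :
    Nat.card (F →g G) =
      ∑ᶠ ψ : {f : ↥(spineSet D) → W //
          ∀ a b : ↥(spineSet D), (F.induce (spineSet D)).Adj a b → G.Adj (f a) (f b)},
        (D.attach.map fun p =>
          Nat.card {φ : F.induce p.1.2 →g G //
            ∀ v (hv : v ∈ p.1.1),
              φ ⟨v, hD.mem_leg p.1 p.2 v hv⟩ = ψ.1 ⟨v, ⟨p.1, p.2, hv⟩⟩}).prod := by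
  classical
  have hlegs' : ∀ i j : Fin D.length, i ≠ j → ∀ v : VF,
      v ∈ (D.get i).2 → v ∈ (D.get j).2 → v ∈ spineSet D := by
    intro i j hij v hvi hvj
    exact hlegs i.1 j.1 i.2 j.2 (fun h => hij (Fin.ext h)) v hvi hvj
  have hlegspine' : ∀ p ∈ D, ∀ v : VF, v ∈ p.2 → v ∈ spineSet D → v ∈ p.1 :=
    fun p hp v h1 h2 => (hlegspine p hp v).1 ⟨h1, h2⟩
  have hvert' : ∀ v : VF, v ∉ spineSet D → ∃ i : Fin D.length, v ∈ (D.get i).2 := by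
    intro v hv
    rcases hvert v with h | ⟨p, hp, hvp⟩
    · exact absurd h hv
    · obtain ⟨i, rfl⟩ := List.mem_iff_get.mp hp
      exact ⟨i, hvp⟩
  have hedge' : ∀ u v : VF, F.Adj u v → (u ∈ spineSet D ∧ v ∈ spineSet D) ∨
      ∃ i : Fin D.length, u ∈ (D.get i).2 ∧ v ∈ (D.get i).2 := by
    intro u v huv
    rcases hedge huv with h | ⟨p, hp, h1, h2⟩
    · exact Or.inl h
    · obtain ⟨i, rfl⟩ := List.mem_iff_get.mp hp
      exact Or.inr ⟨i, h1, h2⟩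
  have hcard : Nat.card (F →g G) =
      Nat.card (Σ ψ : SpineHom F G D,
        ∀ i : Fin D.length, LegHom F G D hD.mem_leg ψ (legIdx D i)) :=
    Nat.card_eq_of_bijective _
      (restrictAll_bijective F G D hD.mem_leg hlegs' hlegspine' hvert' hedge')
  rw [hcard, natCard_sigma]
  refine finsum_congr fun ψ => ?_
  rw [Nat.card_pi, ← List.ofFn_getElem_eq_map, List.prod_ofFn]
  refine Fintype.prod_equiv (finCongr (List.length_attach (l := D)).symm) _ _ fun i => ?_
  exact congrArg (fun p => Nat.card (LegHom F G D hD.mem_leg ψ p))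
    (Subtype.ext (by simp [legIdx]))
end

section
/- For every integer t ≥ 0 and all natural numbers D_0, D_1, D_2, …, D_t, there exist natural-number exponents s_1, s_2, …, s_t such that D_0 ≤ 2^{s_1} and the map sending each t-tuple (d_1, d_2, …, d_t) of natural numbers satisfying 1 ≤ d_i < D_i for all i ∈ [t] to the product d_1^{s_1} · d_2^{s_2} · ⋯ · d_t^{s_t} is injective on the set of such tuples. -/
private lemma bern_aux (a s : ℕ) : a ^ (s + 1) + (s + 1) * a ^ s ≤ (a + 1) ^ (s + 1) := by
  induction s with
  | zero => simp [pow_succ]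
  | succ s ih =>
      have h1 : (a ^ (s + 1) + (s + 1) * a ^ s) * (a + 1) ≤ (a + 1) ^ (s + 1) * (a + 1) :=
        Nat.mul_le_mul_right _ ih
      have h2 : a ^ s * a = a ^ (s + 1) := (pow_succ a s).symm
      have h3 : a ^ (s + 1) * a = a ^ (s + 2) := (pow_succ a (s + 1)).symm
      calc a ^ (s + 2) + (s + 2) * a ^ (s + 1)
          ≤ (a ^ (s + 1) + (s + 1) * a ^ s) * (a + 1) := by
            have hx : (a ^ (s + 1) + (s + 1) * a ^ s) * (a + 1)
                = a ^ (s + 2) + (s + 2) * a ^ (s + 1) + (s + 1) * a ^ s := by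
              rw [← h2, ← h3]; ring
            linarith [Nat.zero_le ((s + 1) * a ^ s)]
        _ ≤ (a + 1) ^ (s + 1) * (a + 1) := h1
        _ = (a + 1) ^ (s + 2) := (pow_succ (a + 1) (s + 1)).symm

private lemma key_aux (a B Dt m : ℕ) (ha : 1 ≤ a) (haD : a < Dt) (hm : B * Dt ≤ m) :
    a ^ (m + 1) * B < (a + 1) ^ (m + 1) := by
  rcases Nat.eq_zero_or_pos B with hB | hB
  · subst hB; simp
  · have hbern := bern_aux a m
    have hc : a * (B - 1) < m + 1 := by
      have h1 : a * (B - 1) < B * Dt := by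
        calc a * (B - 1) < Dt * B := Nat.mul_lt_mul_of_lt_of_lt haD (by omega)
          _ = B * Dt := mul_comm _ _
      omega
    have hpow : 1 ≤ a ^ m := Nat.one_le_pow _ _ ha
    have h2 : a ^ m * (a * (B - 1)) < a ^ m * (m + 1) :=
      mul_lt_mul_of_pos_left hc (by positivity)
    have h3 : a ^ (m + 1) * B = a ^ (m + 1) + a ^ m * (a * (B - 1)) := by
      have hp : a ^ m * a = a ^ (m + 1) := (pow_succ a m).symm
      obtain ⟨b, rfl⟩ : ∃ b, B = b + 1 := ⟨B - 1, by omega⟩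
      simp only [Nat.add_sub_cancel]
      rw [← hp]; ring
    calc a ^ (m + 1) * B = a ^ (m + 1) + a ^ m * (a * (B - 1)) := h3
      _ < a ^ (m + 1) + a ^ m * (m + 1) := by omega
      _ = a ^ (m + 1) + (m + 1) * a ^ m := by ring
      _ ≤ (a + 1) ^ (m + 1) := hbern

private lemma faithful_aux (t : ℕ) (D0 : ℕ) (D : Fin t → ℕ) :
    ∃ s : Fin t → ℕ,
      (∀ i : Fin t, D0 ≤ 2 ^ s i) ∧
      Set.InjOn (fun d : Fin t → ℕ => ∏ i : Fin t, d i ^ s i)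
        {d : Fin t → ℕ | ∀ i : Fin t, 1 ≤ d i ∧ d i < D i} := by
  induction t with
  | zero =>
      exact ⟨fun i => i.elim0, fun i => i.elim0,
        fun d _ e _ _ => funext fun i => i.elim0⟩
  | succ n ih =>
      obtain ⟨s', hs'1, hs'2⟩ := ih (fun i => D i.castSucc)
      set B := ∏ i : Fin n, (D i.castSucc) ^ s' i with hBdef
      set Dl := D (Fin.last n) with hDl
      set sl := B * Dl + D0 + 1 with hsl
      refine ⟨Fin.snoc s' sl, ?_, ?_⟩
      · intro i
        refine Fin.lastCases ?_ (fun j => ?_) i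
        · rw [Fin.snoc_last]
          calc D0 ≤ 2 ^ D0 := (Nat.lt_two_pow_self (n := D0)).le
            _ ≤ 2 ^ sl := Nat.pow_le_pow_right (by norm_num) (by omega)
        · rw [Fin.snoc_castSucc]; exact hs'1 j
      · intro d hd e he hde
        simp only [Set.mem_setOf_eq] at hd he
        simp only [Fin.prod_univ_castSucc, Fin.snoc_castSucc, Fin.snoc_last] at hde
        set P := ∏ i : Fin n, d i.castSucc ^ s' i with hPdef
        set Q := ∏ i : Fin n, e i.castSucc ^ s' i with hQdef
        have hP1 : 1 ≤ P :=
          Finset.one_le_prod' fun i _ => Nat.one_le_pow _ _ (hd i.castSucc).1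
        have hQ1 : 1 ≤ Q :=
          Finset.one_le_prod' fun i _ => Nat.one_le_pow _ _ (he i.castSucc).1
        have hPB : P ≤ B :=
          Finset.prod_le_prod' fun i _ =>
            Nat.pow_le_pow_left (le_of_lt (hd i.castSucc).2) _
        have hQB : Q ≤ B :=
          Finset.prod_le_prod' fun i _ =>
            Nat.pow_le_pow_left (le_of_lt (he i.castSucc).2) _
        -- determine the last coordinate
        have hkey : ∀ a b P' Q' : ℕ, 1 ≤ a → a < b → b < Dl → 1 ≤ Q' → P' ≤ B →
            P' * a ^ sl < Q' * b ^ sl := by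
          intro a b P' Q' ha hab hb hQ' hP'
          have h1 : a ^ sl * B < (a + 1) ^ sl := by
            rw [hsl]
            exact key_aux a B Dl (B * Dl + D0) ha (lt_trans hab hb) (by omega)
          calc P' * a ^ sl ≤ B * a ^ sl := Nat.mul_le_mul_right _ hP'
            _ = a ^ sl * B := mul_comm _ _
            _ < (a + 1) ^ sl := h1
            _ ≤ b ^ sl := Nat.pow_le_pow_left (by omega) _
            _ ≤ Q' * b ^ sl := Nat.le_mul_of_pos_left _ hQ'
        have hlast : d (Fin.last n) = e (Fin.last n) := by
          rcases lt_trichotomy (d (Fin.last n)) (e (Fin.last n)) with h | h | h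
          · exact absurd hde (Nat.ne_of_lt
              (hkey _ _ P Q (hd _).1 h (he _).2 hQ1 hPB))
          · exact h
          · exact absurd hde.symm (Nat.ne_of_lt
              (hkey _ _ Q P (he _).1 h (hd _).2 hP1 hQB))
        rw [hlast] at hde
        have hc : 0 < e (Fin.last n) ^ sl :=
          pow_pos (he (Fin.last n)).1 _
        have hPQ : P = Q := Nat.eq_of_mul_eq_mul_right hc hde
        have hrest : (fun i : Fin n => d i.castSucc) = fun i : Fin n => e i.castSucc := by
          apply hs'2
          · exact fun i => hd i.castSucc
          · exact fun i => he i.castSucc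
          · exact hPQ
        funext i
        refine Fin.lastCases hlast (fun j => ?_) i
        exact congrFun hrest j

/-- For every `t ≥ 0` and naturals `D₀, D₁, …, D_t` there are exponents
`s₁, …, s_t` with `D₀ ≤ 2^{s₁}`, such that the product `d₁^{s₁} ⋯ d_t^{s_t}` injectively
represents all `t`-tuples `(d₁, …, d_t)` with `1 ≤ dᵢ < Dᵢ` for all `i`. -/
theorem faithful_product_exists (t : ℕ) (D0 : ℕ) (D : Fin t → ℕ) :
    ∃ s : Fin t → ℕ,
      (∀ ht : 0 < t, D0 ≤ 2 ^ s ⟨0, ht⟩) ∧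
      Set.InjOn (fun d : Fin t → ℕ => ∏ i : Fin t, d i ^ s i)
        {d : Fin t → ℕ | ∀ i : Fin t, 1 ≤ d i ∧ d i < D i} := by
  obtain ⟨s, h1, h2⟩ := faithful_aux t D0 D
  exact ⟨s, fun ht => h1 _, h2⟩
end
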